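/- arXiv:2006.07542 — 2 statements merged into one kernel-verified Lean document; each statement's English description precedes it below -/
import Mathlib

section
/- If T: V → U(m) is an operator solution of a linear constraint system Mx = b over ℤ/d, then applying the determinant and taking the ℤ/d-valued logarithm yields a scalar solution of the system M x = m·b over ℤ/d; in particular, det(T(v_1))^{M_{k1}} ⋯ det(T(v_c))^{M_{kc}} = e^{2πi m b_k/d} for all k. -/
open Matrix
open scoped Real

namespace Matrix

variable {n R : Type*} [Fintype n] [DecidableEq n] [CommRing R]

theorem det_pow_eq_one_of_pow_eq_one {A : Matrix n n R} {d : ℕ} (h : A ^ d = 1) :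
    A.det ^ d = 1 := by
  rw [← det_pow, h, det_one]

theorem det_list_prod (l : List (Matrix n n R)) : l.prod.det = (l.map det).prod :=
  map_list_prod detMonoidHom l

theorem prod_det_pow_eq_of_prod_pow_eq_smul_one {c : ℕ} (A : Fin c → Matrix n n R)
    (e : Fin c → ℕ) (z : R) (h : ((List.finRange c).map fun i => A i ^ e i).prod = z • 1) :
    ∏ i, (A i).det ^ e i = z ^ Fintype.card n := by
  have hdet := congrArg det h
  rw [det_list_prod, List.map_map, det_smul, det_one, mul_one] at hdet
  simpa only [Fin.prod_univ_def, Function.comp_def, det_pow] using hdet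

end Matrix

theorem det_of_operator_solution_general (d r c m : ℕ)
    (M : Matrix (Fin r) (Fin c) (ZMod d)) (b : Fin r → ZMod d)
    (A : Fin c → Matrix.unitaryGroup (Fin m) ℂ)
    (htor : ∀ i, (A i : Matrix (Fin m) (Fin m) ℂ) ^ d = 1)
    (hsol : ∀ k, ((List.finRange c).map
        (fun i => (A i : Matrix (Fin m) (Fin m) ℂ) ^ (M k i).val)).prod =
      Complex.exp (2 * π * Complex.I * (b k).val / d) • 1) :
    (∀ i, ((A i : Matrix (Fin m) (Fin m) ℂ).det) ^ d = 1) ∧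
    (∀ k, ∏ i, ((A i : Matrix (Fin m) (Fin m) ℂ).det) ^ (M k i).val =
      Complex.exp (2 * π * Complex.I * (m * (b k).val) / d)) := by
  refine ⟨fun i => det_pow_eq_one_of_pow_eq_one (htor i), fun k => ?_⟩
  rw [prod_det_pow_eq_of_prod_pow_eq_smul_one _ _ _ (hsol k), Fintype.card_fin,
    ← Complex.exp_nat_mul]
  congr 1
  ring

/-- taking determinants of an operator solution over `U(m)` of a
linear constraint system `Mx = b` over `ℤ/d` yields a scalar solution of
`Mx = m·b`: each determinant is a `d`-th root of unity and
`det(A_1)^{M_{k1}} ⋯ det(A_c)^{M_{kc}} = e^{2πi m b_k / d}` for all `k`. -/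
theorem det_of_operator_solution (d r c m : ℕ) (hd : 0 < d) (hm : 0 < m)
    (M : Matrix (Fin r) (Fin c) (ZMod d)) (b : Fin r → ZMod d)
    (A : Fin c → Matrix.unitaryGroup (Fin m) ℂ)
    (htor : ∀ i, (A i : Matrix (Fin m) (Fin m) ℂ) ^ d = 1)
    (hcomm : ∀ k i j, M k i ≠ 0 → M k j ≠ 0 →
      Commute (A i : Matrix (Fin m) (Fin m) ℂ) (A j : Matrix (Fin m) (Fin m) ℂ))
    (hsol : ∀ k, ((List.finRange c).map
        (fun i => (A i : Matrix (Fin m) (Fin m) ℂ) ^ (M k i).val)).prod =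
      Complex.exp (2 * π * Complex.I * (b k).val / d) • 1) :
    (∀ i, ((A i : Matrix (Fin m) (Fin m) ℂ).det) ^ d = 1) ∧
    (∀ k, ∏ i, ((A i : Matrix (Fin m) (Fin m) ℂ).det) ^ (M k i).val =
      Complex.exp (2 * π * Complex.I * (m * (b k).val) / d)) :=
  det_of_operator_solution_general d r c m M b A htor hsol
end

section
/- If a linear constraint system Mx = b over ℤ/d admits an operator solution over U(m) and gcd(d,m) = 1, then it admits a scalar solution. -/
open Matrix
open scoped Real

/-!
Taking determinants turns an operator solution `A` over `U(m)` into a scalar solution of the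
system with right-hand side multiplied by `m`: `det (A i) ^ d = 1` and
`∏ det (A i) ^ M k i = ω_k ^ m`. Since `m` is invertible modulo `d`, say `m * n ≡ 1 [MOD d]`,
raising everything to the `n`-th power recovers the original right-hand side `ω_k`,
a `d`-th root of unity.
-/

theorem Nat.exists_mul_modEq_one_of_coprime {d m : ℕ} (h : d.Coprime m) :
    ∃ n, m * n ≡ 1 [MOD d] := by
  rcases eq_or_ne d 0 with rfl | hd
  · exact ⟨1, by rw [(Nat.coprime_zero_left m).mp h]⟩
  · obtain ⟨n, -, hn⟩ := Nat.exists_mul_mod_eq_of_coprime 1 h.symm hd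
    exact ⟨n, hn⟩

theorem Complex.exp_two_pi_I_mul_div_pow_self (a d : ℕ) :
    Complex.exp (2 * π * Complex.I * a / d) ^ d = 1 := by
  rcases eq_or_ne d 0 with rfl | hd
  · exact pow_zero _
  · rw [← Complex.exp_nat_mul, mul_div_cancel₀ _ (Nat.cast_ne_zero.mpr hd),
      mul_comm, ← Complex.exp_nat_mul_two_pi_mul_I a]

theorem Matrix.det_list_prod_map_pow {ι n R : Type*} [Fintype n] [DecidableEq n] [CommRing R]
    (l : List ι) (A : ι → Matrix n n R) (e : ι → ℕ) :
    det (l.map fun i => A i ^ e i).prod = (l.map fun i => det (A i) ^ e i).prod := by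
  rw [← coe_detMonoidHom, MonoidHom.map_list_prod, List.map_map]
  simp only [Function.comp_def, coe_detMonoidHom, det_pow]

theorem Matrix.list_prod_map_det_pow_pow_eq {ι n R : Type*} [Fintype n] [DecidableEq n]
    [CommRing R] {d k : ℕ} (hk : Fintype.card n * k ≡ 1 [MOD d])
    (l : List ι) (A : ι → Matrix n n R) (e : ι → ℕ) {ω : R} (hω : ω ^ d = 1)
    (hsol : (l.map fun i => A i ^ e i).prod = ω • 1) :
    (l.map fun i => (det (A i) ^ k) ^ e i).prod = ω := by
  calc (l.map fun i => (det (A i) ^ k) ^ e i).prod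
      = (l.map fun i => det (A i) ^ e i).prod ^ k := by
        rw [← powMonoidHom_apply, map_list_prod, List.map_map]
        simp only [Function.comp_def, powMonoidHom_apply, ← pow_mul, mul_comm k]
    _ = ω ^ (Fintype.card n * k) := by
        rw [← det_list_prod_map_pow, hsol, det_smul, det_one, mul_one, pow_mul]
    _ = ω := (pow_eq_pow_of_modEq hk hω).trans (pow_one ω)

theorem scalar_solution_of_coprime_operator_solution_general (d r c m : ℕ)
    (hcop : Nat.Coprime d m)
    (M : Matrix (Fin r) (Fin c) (ZMod d)) (b : Fin r → ZMod d)
    (A : Fin c → Matrix.unitaryGroup (Fin m) ℂ)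
    (htor : ∀ i, (A i : Matrix (Fin m) (Fin m) ℂ) ^ d = 1)
    (hsol : ∀ k, ((List.finRange c).map
        (fun i => (A i : Matrix (Fin m) (Fin m) ℂ) ^ (M k i).val)).prod =
      Complex.exp (2 * π * Complex.I * (b k).val / d) • 1) :
    ∃ α : Fin c → ℂ, (∀ i, α i ^ d = 1) ∧
      ∀ k, ∏ i, α i ^ (M k i).val =
        Complex.exp (2 * π * Complex.I * (b k).val / d) := by
  obtain ⟨n, hn⟩ := Nat.exists_mul_modEq_one_of_coprime hcop
  refine ⟨fun i => (A i : Matrix (Fin m) (Fin m) ℂ).det ^ n, fun i => ?_, fun k => ?_⟩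
  · rw [← pow_mul, mul_comm, pow_mul, ← det_pow, htor, det_one, one_pow]
  · rw [← Fintype.card_fin m] at hn
    rw [Fin.prod_univ_def]
    exact list_prod_map_det_pow_pow_eq hn _ _ _
      (Complex.exp_two_pi_I_mul_div_pow_self _ d) (hsol k)

/-- if a linear constraint system `Mx = b` over `ℤ/d` admits an
operator solution over `U(m)` and `gcd(d,m) = 1`, then it admits a scalar
solution. -/
theorem scalar_solution_of_coprime_operator_solution (d r c m : ℕ)
    (hd : 0 < d) (hm : 0 < m) (hcop : Nat.Coprime d m)
    (M : Matrix (Fin r) (Fin c) (ZMod d)) (b : Fin r → ZMod d)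
    (A : Fin c → Matrix.unitaryGroup (Fin m) ℂ)
    (htor : ∀ i, (A i : Matrix (Fin m) (Fin m) ℂ) ^ d = 1)
    (hcomm : ∀ k i j, M k i ≠ 0 → M k j ≠ 0 →
      Commute (A i : Matrix (Fin m) (Fin m) ℂ) (A j : Matrix (Fin m) (Fin m) ℂ))
    (hsol : ∀ k, ((List.finRange c).map
        (fun i => (A i : Matrix (Fin m) (Fin m) ℂ) ^ (M k i).val)).prod =
      Complex.exp (2 * π * Complex.I * (b k).val / d) • 1) :
    ∃ α : Fin c → ℂ, (∀ i, α i ^ d = 1) ∧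
      ∀ k, ∏ i, α i ^ (M k i).val =
        Complex.exp (2 * π * Complex.I * (b k).val / d) :=
  scalar_solution_of_coprime_operator_solution_general d r c m hcop M b A htor hsol
end
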